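/- If a finite partial order P has property (itov), then every element of P is regular to every full trunk of P: for every full trunk T of P, every x ∈ P, and all y, z ∈ T with y = z or y ∼ z, the order relation of x to y is the same as that of x to z (x < y iff x < z, and y < x iff z < x). -/

import Mathlib

variable {P : Type*} [PartialOrder P]

/-- Two elements of a partial order are incomparable if neither is `≤` the other. -/
def Incomp (x y : P) : Prop := x ≠ y ∧ ¬x ≤ y ∧ ¬y ≤ x

/-- Four elements realize the pattern of `O_obs1` ('2+2'). -/
def Obs1At (a b c d : P) : Prop :=
  a < b ∧ c < d ∧ Incomp a c ∧ Incomp a d ∧ Incomp b c ∧ Incomp b d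

/-- Four elements realize the pattern of `O_obs2` ('N'). -/
def Obs2At (a b c d : P) : Prop :=
  a < b ∧ c < d ∧ c < b ∧ Incomp a c ∧ Incomp a d ∧ Incomp b d

/-- Property (itov): no induced suborder isomorphic to `O_obs1` nor to `O_obs2`. -/
def Itov (P : Type*) [PartialOrder P] : Prop :=
  (¬∃ a b c d : P, Obs1At a b c d) ∧ (¬∃ a b c d : P, Obs2At a b c d)

/-- A subset `T` of a partial order is a trunk if the incomparability relation is
transitive on `T`. -/
def IsTrunkOn (T : Set P) : Prop :=
  ∀ x y z : P, x ∈ T → y ∈ T → z ∈ T → x ≠ z → Incomp x y → Incomp y z → Incomp x z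

/-- A maximum chain of a finite partial order: a chain of maximum cardinality. -/
def IsMaximumChain (C : Set P) : Prop :=
  IsChain (· ≤ ·) C ∧ ∀ D : Set P, IsChain (· ≤ ·) D → D.ncard ≤ C.ncard

/-- A full trunk: a trunk containing at least one maximum chain. -/
def IsFullTrunk (T : Set P) : Prop :=
  IsTrunkOn T ∧ ∃ C : Set P, IsMaximumChain C ∧ C ⊆ T

lemma Incomp.symm' {x y : P} (h : Incomp x y) : Incomp y x := ⟨h.1.symm, h.2.2, h.2.1⟩

lemma key {P : Type*} [PartialOrder P] [Fintype P] (h : Itov P)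
    (T : Set P) (hT : IsFullTrunk T) (x y z : P) (hy : y ∈ T) (hz : z ∈ T)
    (hyz : Incomp y z) (hxy : x < y) : x < z := by
  obtain ⟨htr, C, ⟨hCchain, hCmax⟩, hCT⟩ := hT
  by_contra hxz'
  have hxz : Incomp x z := by
    refine ⟨?_, ?_, ?_⟩
    · rintro rfl; exact hyz.2.2 hxy.le
    · intro hle
      exact hxz' (lt_of_le_of_ne hle (by rintro rfl; exact hyz.2.2 hxy.le))
    · intro hle; exact hyz.2.2 (hle.trans hxy.le)
  -- every c in C with c < y satisfies c < z
  have hAz : ∀ c ∈ C, c < y → c < z := by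
    intro c hc hcy
    by_contra hcz
    have hne : c ≠ z := by rintro rfl; exact hyz.2.2 hcy.le
    have h1 : ¬ c ≤ z := fun hle => hcz (lt_of_le_of_ne hle hne)
    have h2 : ¬ z ≤ c := fun hle => hyz.2.2 (hle.trans hcy.le)
    have hcy' : Incomp c y :=
      htr c z y (hCT hc) hz hy hcy.ne ⟨hne, h1, h2⟩ hyz.symm'
    exact hcy'.2.1 hcy.le
  -- every c in C with c < y satisfies c < x
  have hA : ∀ c ∈ C, c < y → c < x := by
    intro a ha hay
    have haz := hAz a ha hay
    have h1 : ¬ x ≤ a := fun hle => hxz' (lt_of_le_of_lt hle haz)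
    by_contra hax
    have hne : x ≠ a := fun e => hxz' (e ▸ haz)
    have h2 : ¬ a ≤ x := fun hle => hax (lt_of_le_of_ne hle hne.symm)
    exact h.2 ⟨x, y, a, z, hxy, haz, hay, ⟨hne, h1, h2⟩, hxz, hyz⟩
  have hxC : x ∉ C := fun hx => lt_irrefl x (hA x hx hxy)
  -- the middle part
  set M : Set P := {c ∈ C | ¬ c < y ∧ ¬ y < c} with hM
  have hMsub : M ⊆ C := fun c hc => hc.1
  -- |M| ≥ 2
  have hM2 : 2 ≤ M.ncard := by
    set D : Set P := insert x (insert y (C \ M)) with hD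
    have hyCM : y ∉ C \ M := by
      rintro ⟨hyC, hyM⟩
      exact hyM ⟨hyC, lt_irrefl y, lt_irrefl y⟩
    have hxD : x ∉ insert y (C \ M) := by
      rintro (rfl | ⟨hxC', _⟩)
      · exact lt_irrefl x hxy
      · exact hxC hxC'
    have hDchain : IsChain (· ≤ ·) D := by
      intro a ha b hb hne
      have key2 : ∀ c ∈ C \ M, c ≤ y ∨ y ≤ c := by
        rintro c ⟨hcC, hcM⟩
        by_cases h1 : c < y
        · exact Or.inl h1.le
        · by_cases h2 : y < c
          · exact Or.inr h2.le
          · exact absurd ⟨hcC, h1, h2⟩ hcM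
      have keyx : ∀ c ∈ C \ M, c ≤ x ∨ x ≤ c := by
        rintro c hc
        rcases key2 c hc with h1 | h1
        · rcases eq_or_lt_of_le h1 with rfl | h1
          · exact Or.inr hxy.le
          · exact Or.inl (hA c hc.1 h1).le
        · exact Or.inr (hxy.le.trans h1)
      rcases ha with rfl | rfl | ha <;> rcases hb with rfl | rfl | hb
      · exact absurd rfl hne
      · exact Or.inl hxy.le
      · exact (keyx b hb).symm
      · exact Or.inr hxy.le
      · exact absurd rfl hne
      · exact (key2 b hb).symm
      · exact keyx a ha
      · exact key2 a ha
      · exact hCchain ha.1 hb.1 hne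
    have hle := hCmax D hDchain
    have e1 : D.ncard = (C \ M).ncard + 2 := by
      rw [hD, Set.ncard_insert_of_notMem hxD (Set.toFinite _),
        Set.ncard_insert_of_notMem hyCM (Set.toFinite _)]
    have e2 : (C \ M).ncard + M.ncard = C.ncard :=
      Set.ncard_diff_add_ncard_of_subset hMsub (Set.toFinite _)
    omega
  -- elements of M are incomparable with y
  have hMy : ∀ m ∈ M, Incomp m y := by
    intro m hm
    have hne : m ≠ y := by
      rintro rfl
      obtain ⟨m', hm', hne'⟩ := Set.exists_ne_of_one_lt_ncard (s := M) (by omega) m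
      rcases hCchain hm'.1 hm.1 hne' with hle | hle
      · exact hm'.2.1 (lt_of_le_of_ne hle hne')
      · exact hm'.2.2 (lt_of_le_of_ne hle (Ne.symm hne'))
    exact ⟨hne, fun hle => hm.2.1 (lt_of_le_of_ne hle hne),
      fun hle => hm.2.2 (lt_of_le_of_ne hle hne.symm)⟩
  -- no element of M is below x
  have hMltx : ∀ m ∈ M, ¬ m < x := fun m hm hlt => (hMy m hm).2.1 (hlt.le.trans hxy.le)
  -- some element of M is incomparable with x
  have hex : ∃ m ∈ M, ¬ x < m := by
    by_contra hc
    push_neg at hc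
    have hDchain : IsChain (· ≤ ·) (insert x C) := by
      intro a ha b hb hne
      have keyx : ∀ c ∈ C, c ≤ x ∨ x ≤ c := by
        intro c hcC
        by_cases h1 : c < y
        · exact Or.inl (hA c hcC h1).le
        · by_cases h2 : y < c
          · exact Or.inr (hxy.le.trans h2.le)
          · exact Or.inr (hc c ⟨hcC, h1, h2⟩).le
      rcases ha with rfl | ha <;> rcases hb with rfl | hb
      · exact absurd rfl hne
      · exact (keyx b hb).symm
      · exact keyx a ha
      · exact hCchain ha hb hne
    have hle := hCmax _ hDchain
    rw [Set.ncard_insert_of_notMem hxC (Set.toFinite _)] at hle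
    omega
  obtain ⟨m, hmM, hxm⟩ := hex
  have hmy := hMy m hmM
  have hmx : Incomp m x := by
    refine ⟨?_, ?_, ?_⟩
    · rintro rfl; exact hmy.2.1 hxy.le
    · intro hle
      rcases eq_or_lt_of_le hle with rfl | hlt
      · exact hmy.2.1 hxy.le
      · exact hMltx m hmM hlt
    · intro hle
      rcases eq_or_lt_of_le hle with rfl | hlt
      · exact hmy.2.1 hxy.le
      · exact hxm hlt
  obtain ⟨m', hm'M, hm'ne⟩ := Set.exists_ne_of_one_lt_ncard (s := M) (by omega) m
  have hm'y := hMy m' hm'M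
  have hm'xne : m' ≠ x := by rintro rfl; exact hm'y.2.1 hxy.le
  rcases hCchain hm'M.1 hmM.1 hm'ne with hle | hle
  · have hm'm : m' < m := lt_of_le_of_ne hle hm'ne
    have hm'x : Incomp m' x := by
      refine ⟨hm'xne, ?_, ?_⟩
      · intro hle2
        rcases eq_or_lt_of_le hle2 with rfl | hlt
        · exact hm'y.2.1 hxy.le
        · exact hMltx m' hm'M hlt
      · intro hle2
        exact hmx.2.2 (hle2.trans hm'm.le)
    exact h.1 ⟨m', m, x, y, hm'm, hxy, hm'x, hm'y, hmx, hmy⟩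
  · have hmm' : m < m' := lt_of_le_of_ne hle (Ne.symm hm'ne)
    by_cases hxm' : x < m'
    · exact h.2 ⟨m, m', x, y, hmm', hxy, hxm', hmx, hmy, hm'y⟩
    · have hm'x : Incomp m' x := by
        refine ⟨hm'xne, ?_, ?_⟩
        · intro hle2
          rcases eq_or_lt_of_le hle2 with rfl | hlt
          · exact hm'y.2.1 hxy.le
          · exact hMltx m' hm'M hlt
        · intro hle2
          exact hxm' (lt_of_le_of_ne hle2 (Ne.symm hm'xne))
      exact h.1 ⟨m, m', x, y, hmm', hxy, hmx, hmy, hm'x, hm'y⟩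

lemma incomp_dual {x y : P} (h : Incomp x y) :
    Incomp (OrderDual.toDual x) (OrderDual.toDual y) :=
  ⟨fun e => h.1 (OrderDual.toDual.injective e), h.2.2, h.2.1⟩

lemma incomp_of_dual {x y : Pᵒᵈ} (h : Incomp x y) :
    Incomp (OrderDual.ofDual x) (OrderDual.ofDual y) :=
  ⟨fun e => h.1 (OrderDual.ofDual.injective e), h.2.2, h.2.1⟩

lemma itov_dual (h : Itov P) : Itov Pᵒᵈ := by
  constructor
  · rintro ⟨a, b, c, d, hab, hcd, h1, h2, h3, h4⟩
    exact h.1 ⟨OrderDual.ofDual b, OrderDual.ofDual a, OrderDual.ofDual d, OrderDual.ofDual c,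
      hab, hcd, incomp_of_dual h4, incomp_of_dual h3,
      incomp_of_dual h2, incomp_of_dual h1⟩
  · rintro ⟨a, b, c, d, hab, hcd, hcb, h1, h2, h3⟩
    exact h.2 ⟨OrderDual.ofDual d, OrderDual.ofDual c, OrderDual.ofDual b, OrderDual.ofDual a,
      hcd, hab, hcb, incomp_of_dual h3.symm', incomp_of_dual h2.symm', incomp_of_dual h1.symm'⟩

lemma chain_dual {C : Set P} (hC : IsChain (· ≤ ·) C) :
    IsChain (· ≤ ·) (OrderDual.ofDual ⁻¹' C : Set Pᵒᵈ) :=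
  fun a ha b hb hne => (hC ha hb (fun e => hne (OrderDual.ofDual.injective e))).symm

lemma chain_of_dual {C : Set Pᵒᵈ} (hC : IsChain (· ≤ ·) C) :
    IsChain (· ≤ ·) (OrderDual.toDual ⁻¹' C : Set P) :=
  fun a ha b hb hne => (hC ha hb (fun e => hne (OrderDual.toDual.injective e))).symm

lemma fullTrunk_dual {T : Set P} (hT : IsFullTrunk T) :
    IsFullTrunk (OrderDual.ofDual ⁻¹' T : Set Pᵒᵈ) := by
  obtain ⟨htr, C, ⟨hCchain, hCmax⟩, hCT⟩ := hT
  refine ⟨?_, OrderDual.ofDual ⁻¹' C, ⟨chain_dual hCchain, ?_⟩, fun c hc => hCT hc⟩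
  · intro a b c ha hb hc hne h1 h2
    exact (incomp_dual (htr _ _ _ ha hb hc
      (fun e => hne (congrArg OrderDual.toDual e)) (incomp_of_dual h1)
      (incomp_of_dual h2)) : _)
  · intro D hD
    have := hCmax (OrderDual.toDual ⁻¹' D) (chain_of_dual hD)
    exact this

/-- If a finite partial order has property (itov), then every element is regular to
every full trunk: it stands in the same order relation to any two elements of the
trunk lying on the same level (i.e. equal or incomparable). -/
theorem itov_element_regular_to_full_trunk
    (P : Type*) [PartialOrder P] [Fintype P] (h : Itov P) :
    ∀ T : Set P, IsFullTrunk T → ∀ x : P, ∀ y ∈ T, ∀ z ∈ T,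
      (y = z ∨ Incomp y z) → ((x < y ↔ x < z) ∧ (y < x ↔ z < x)) := by
  intro T hT x y hyT z hzT hyz'
  rcases hyz' with rfl | hyz
  · exact ⟨Iff.rfl, Iff.rfl⟩
  · refine ⟨⟨fun hxy => key h T hT x y z hyT hzT hyz hxy,
      fun hxz => key h T hT x z y hzT hyT hyz.symm' hxz⟩,
      ⟨fun hyx => ?_, fun hzx => ?_⟩⟩
    · exact key (P := Pᵒᵈ) (itov_dual h) _ (fullTrunk_dual hT)
        (OrderDual.toDual x) (OrderDual.toDual y) (OrderDual.toDual z)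
        hyT hzT (incomp_dual hyz) hyx
    · exact key (P := Pᵒᵈ) (itov_dual h) _ (fullTrunk_dual hT)
        (OrderDual.toDual x) (OrderDual.toDual z) (OrderDual.toDual y)
        hzT hyT (incomp_dual hyz.symm') hzx
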